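/- Let L_n(a,b) be the Lucas polynomials (L_0 = 2, L_1 = a, L_{n+2} = a·L_{n+1} - b·L_n). Then for every m ≥ 0, the polynomial x^2 - a·x + b divides x^(2m+2) - L_{m+1}(a,b)·x^(m+1) + b^(m+1) in ℤ[a,b][x]. -/

import Mathlib

open Polynomial MvPolynomial

noncomputable def a : MvPolynomial (Fin 2) ℤ := MvPolynomial.X 0
noncomputable def b : MvPolynomial (Fin 2) ℤ := MvPolynomial.X 1

noncomputable def L : ℕ → MvPolynomial (Fin 2) ℤ
  | 0 => 2
  | 1 => a
  | (n+2) => a * L (n+1) - b * L n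

/-
Adjoin a root `t` of `x² - a x + b` to `ℤ[a,b]`; then `s = a - t` is the other root, so
`t + s = a` and `t s = b`, and the Lucas recurrence gives `L n = tⁿ + sⁿ`. Hence at `x = t`
the polynomial `x²ⁿ - L n xⁿ + bⁿ = (xⁿ - tⁿ)(xⁿ - sⁿ)` vanishes.
-/

theorem map_L_eq_pow_add_pow {S : Type*} [CommRing S] (f : MvPolynomial (Fin 2) ℤ →+* S)
    (t s : S) (ha : f a = t + s) (hb : f b = t * s) (n : ℕ) : f (L n) = t ^ n + s ^ n := by
  induction n using L.induct with
  | case1 => simp only [L, map_ofNat]; ring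
  | case2 => simp only [L, ha]; ring
  | case3 n ih₁ ih₀ =>
    simp only [L, Nat.succ_eq_add_one, map_sub, map_mul, ha, hb, ih₀, ih₁]
    ring

theorem dvd_X_pow_sub_C_L_mul_X_pow_add_C_b_pow (n : ℕ) :
    (Polynomial.X ^ 2 - Polynomial.C a * Polynomial.X + Polynomial.C b
        : Polynomial (MvPolynomial (Fin 2) ℤ))
      ∣ Polynomial.X ^ (2 * n) - Polynomial.C (L n) * Polynomial.X ^ n + Polynomial.C (b ^ n) := by
  set D : Polynomial (MvPolynomial (Fin 2) ℤ) :=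
    Polynomial.X ^ 2 - Polynomial.C a * Polynomial.X + Polynomial.C b
  have hD : AdjoinRoot.mk D D = 0 := AdjoinRoot.mk_self
  rw [← AdjoinRoot.mk_eq_zero]
  simp only [D, map_add, map_sub, map_mul, map_pow, AdjoinRoot.mk_X, AdjoinRoot.mk_C] at hD ⊢
  generalize AdjoinRoot.root D = t at hD ⊢
  have hb : AdjoinRoot.of D b = t * (AdjoinRoot.of D a - t) := by linear_combination hD
  rw [map_L_eq_pow_add_pow (AdjoinRoot.of D) t _ (by ring) hb, hb, mul_pow]
  ring

theorem stmt_9 (m : ℕ) :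
    (Polynomial.X^2 - Polynomial.C a * Polynomial.X + Polynomial.C b
        : Polynomial (MvPolynomial (Fin 2) ℤ))
      ∣ Polynomial.X^(2*m+2) - Polynomial.C (L (m+1)) * Polynomial.X^(m+1)
          + Polynomial.C (b^(m+1)) :=
  dvd_X_pow_sub_C_L_mul_X_pow_add_C_b_pow (m + 1)
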